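/- arXiv:1006.4904 — 2 statements merged into one kernel-verified Lean document; each statement's English description precedes it below -/
import Mathlib

section
/- The Hamming quasi-metric d does not satisfy the triangle inequality: there exist finite sets X and E and soft sets (F,A), (G,B), (H,C) in the soft space (X,E) such that d((F,A),(G,B)) + d((G,B),(H,C)) < d((F,A),(H,C)). (For instance, with X = {a,b,c,d}, E = {e₁,e₂,e₃,e₄}, (F,A) = {e₁={c,b}, e₂={b}, e₃={a,b,c}, e₄={d}}, (G,B) = {e₂={b,c}, e₃={a,b,c,d}}, (H,C) = {e₁={b,d}, e₂={b,c,d}, e₃={a,d}, e₄={a,b,c,d}}, one has d((F,A),(G,B)) = 4, d((G,B),(H,C)) = 5, and d((F,A),(H,C)) = 10.) -/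
open Finset
open scoped symmDiff

/-- The Hamming quasi-metric between soft sets `(F,A)` and `(G,B)` in the soft space `(X,E)`:
`d((F,A),(G,B)) = ‖A Δ B‖ + Σ_{ε ∈ A ∩ B} ‖F(ε) Δ G(ε)‖`. -/
noncomputable def hammingQM {X E : Type*} [DecidableEq X] [DecidableEq E]
    (A : Finset E) (F : E → Finset X) (B : Finset E) (G : E → Finset X) : ℝ :=
  ((A ∆ B).card : ℝ) + ∑ ε ∈ A ∩ B, ((F ε ∆ G ε).card : ℝ)

/-- the Hamming quasi-metric `d` fails the triangle inequality: there are
finite sets `X`, `E` (here `X = E = Fin 4`) and soft sets `(F,A)`, `(G,B)`, `(H,C)` in the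
soft space `(X,E)` with `d((F,A),(G,B)) + d((G,B),(H,C)) < d((F,A),(H,C))`. -/
theorem hammingQM_not_triangle :
    ∃ (A B C : Finset (Fin 4)) (F G H : Fin 4 → Finset (Fin 4)),
      hammingQM A F B G + hammingQM B G C H < hammingQM A F C H := by
  refine ⟨{0,1,2,3}, {1,2}, {0,1,2,3},
    ![{2,1},{1},{0,1,2},{3}], ![∅,{1,2},{0,1,2,3},∅], ![{1,3},{1,2,3},{0,3},{0,1,2,3}], ?_⟩
  simp only [hammingQM]
  norm_cast
end

section
/- Let X = {a,b,c,d} and E = {e₁,e₂,e₃}, and consider the soft sets (F,A) = {e₁=∅, e₂=∅} (so A = {e₁,e₂}), (G,B) = {e₂={b,d}} (so B = {e₂}), and (H,C) = {e₂={b,c,d}} (so C = {e₂}). Then, with respect to the Majumdar–Samanta similarity measure S′(F₁,F₂) = 1/(1 + E^s(F₁,F₂)) applied to the total representations of these soft sets (extending each by the empty set outside its attribute set), both pairs are significantly similar: S′((F,A),(H,C)) ≥ 1/2 and S′((G,B),(H,C)) ≥ 1/2; whereas with respect to the set-operation-based measure S_K^e, one has S_K^e((F,A),(H,C)) < 1/2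 and S_K^e((G,B),(H,C)) = 1/2, so S_K^e discerns (F,A) and (H,C) as non-significantly similar and (G,B) and (H,C) as significantly similar. -/
open Finset
open scoped symmDiff

/-- Majumdar–Samanta Euclidean distance `E^s` between total soft sets `F₁ F₂ : E → P(X)`. -/
noncomputable def msEuclid {X E : Type*} [Fintype X] [Fintype E] [DecidableEq X]
    (F₁ F₂ : E → Finset X) : ℝ :=
  Real.sqrt ((1 / (Fintype.card E : ℝ)) * ∑ e : E, ∑ x : X,
    ((if x ∈ F₁ e then (1 : ℝ) else 0) - (if x ∈ F₂ e then (1 : ℝ) else 0)) ^ 2)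

/-- Majumdar–Samanta similarity measure `S′(F₁,F₂) = 1/(1 + E^s(F₁,F₂))`. -/
noncomputable def msSim {X E : Type*} [Fintype X] [Fintype E] [DecidableEq X]
    (F₁ F₂ : E → Finset X) : ℝ :=
  1 / (1 + msEuclid F₁ F₂)

/-- Euclidean distance between soft sets `(F,A)`, `(G,B)`:
`e((F,A),(G,B)) = ‖A Δ B‖ + √(Σ_{ε ∈ A ∩ B} ‖F(ε) Δ G(ε)‖²)`. -/
noncomputable def softEuclid {X E : Type*} [DecidableEq X] [DecidableEq E]
    (A : Finset E) (F : E → Finset X) (B : Finset E) (G : E → Finset X) : ℝ :=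
  ((A ∆ B).card : ℝ) + Real.sqrt (∑ ε ∈ A ∩ B, ((F ε ∆ G ε).card : ℝ) ^ 2)

/-- Koczy-type similarity measure `S_K^e((F,A),(G,B)) = 1/(1 + e((F,A),(G,B)))`. -/
noncomputable def koczySim {X E : Type*} [DecidableEq X] [DecidableEq E]
    (A : Finset E) (F : E → Finset X) (B : Finset E) (G : E → Finset X) : ℝ :=
  1 / (1 + softEuclid A F B G)

/-- The total representation of a soft set `(F,A)`: extend by `∅` outside `A`. -/
def totalRep {X E : Type*} [DecidableEq E] (A : Finset E) (F : E → Finset X) :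
    E → Finset X :=
  fun e => if e ∈ A then F e else ∅

/-- with `X = {a,b,c,d}` (`a=0,b=1,c=2,d=3` in `Fin 4`),
`E = {e₁,e₂,e₃}` (`Fin 3`), `(F,A) = {e₁=∅, e₂=∅}`, `(G,B) = {e₂={b,d}}`,
`(H,C) = {e₂={b,c,d}}`, the Majumdar–Samanta measure `S′` (on total representations)
declares both pairs significantly similar, whereas the set-operation-based measure
`S_K^e` discerns `(F,A),(H,C)` as non-significantly similar and `(G,B),(H,C)` as
significantly similar. -/
theorem majumdar_samanta_vs_koczy :
    let A : Finset (Fin 3) := {0, 1}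
    let F : Fin 3 → Finset (Fin 4) := fun _ => ∅
    let B : Finset (Fin 3) := {1}
    let G : Fin 3 → Finset (Fin 4) := fun _ => {1, 3}
    let C : Finset (Fin 3) := {1}
    let H : Fin 3 → Finset (Fin 4) := fun _ => {1, 2, 3}
    msSim (totalRep A F) (totalRep C H) ≥ 1 / 2 ∧
    msSim (totalRep B G) (totalRep C H) ≥ 1 / 2 ∧
    koczySim A F C H < 1 / 2 ∧
    koczySim B G C H = 1 / 2 := by
  intro A F B G C H
  have c1 : ((∅ : Finset (Fin 4)) ∆ {1, 2, 3}).card = 3 := by decide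
  have c2 : (({1, 3} : Finset (Fin 4)) ∆ {1, 2, 3}).card = 1 := by decide
  have c3 : (({0, 1} : Finset (Fin 3)) ∆ {1}).card = 1 := by decide
  have c4 : (({1} : Finset (Fin 3)) ∆ {1}).card = 0 := by decide
  have h1 : msEuclid (totalRep A F) (totalRep C H) = 1 := by
    unfold msEuclid totalRep
    rw [show ((1:ℝ)/(Fintype.card (Fin 3):ℝ)) * ∑ e : Fin 3, ∑ x : Fin 4,
      ((if x ∈ (if e ∈ A then F e else ∅) then (1:ℝ) else 0) -
       (if x ∈ (if e ∈ C then H e else ∅) then (1:ℝ) else 0)) ^ 2 = 1 by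
        simp [Fin.sum_univ_succ, A, F, C, H,
          show (({1,2,3}:Finset (Fin 4)).card) = 3 from by decide]]
    exact Real.sqrt_one
  have h2 : msEuclid (totalRep B G) (totalRep C H) = Real.sqrt (1/3) := by
    unfold msEuclid totalRep
    congr 1
    simp [Fin.sum_univ_succ, B, G, C, H]
  have h3 : softEuclid A F C H = 4 := by
    unfold softEuclid
    rw [show A ∆ C = ({0,1} : Finset (Fin 3)) ∆ {1} from rfl, c3]
    rw [show (∑ ε ∈ A ∩ C, ((F ε ∆ H ε).card : ℝ) ^ 2) = 9 by
      simp [A, C, F, H, c1, show (({1,2,3}:Finset (Fin 4)).card) = 3 from by decide]; norm_num]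
    rw [show (9:ℝ) = 3^2 by norm_num, Real.sqrt_sq (by norm_num)]
    norm_num
  have h4 : softEuclid B G C H = 1 := by
    unfold softEuclid
    rw [show B ∆ C = ({1} : Finset (Fin 3)) ∆ {1} from rfl, c4]
    rw [show (∑ ε ∈ B ∩ C, ((G ε ∆ H ε).card : ℝ) ^ 2) = 1 by
      simp [B, C, G, H, c2]]
    rw [Real.sqrt_one]; norm_num
  refine ⟨?_, ?_, ?_, ?_⟩
  · rw [msSim, h1]; norm_num
  · rw [msSim, h2]
    have : Real.sqrt (1/3) ≤ 1 := by
      rw [show (1:ℝ) = Real.sqrt 1 by rw [Real.sqrt_one]]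
      exact Real.sqrt_le_sqrt (by norm_num)
    rw [ge_iff_le, div_le_div_iff₀ (by norm_num) (by positivity)]
    linarith
  · rw [koczySim, h3]; norm_num
  · rw [koczySim, h4]; norm_num
end
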